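/- The atomicity structure A with elements {B, L, R, A, ⊤_FQ, Err}, the lattice order with B below L and R, L and R below A, A below ⊤_FQ, ⊤_FQ below Err, and sequential composition given by Flanagan–Qadeer's table (with Err absorbing), is an effect quantale with unit B and top Err; in particular ▷ is associative and distributes over binary joins on both sides. -/
import Mathlib

structure EffectQuantale (E : Type*) where
  join : E → E → E
  seq : E → E → E
  top : E
  unit : E
  join_comm : ∀ a b, join a b = join b a
  join_assoc : ∀ a b c, join (join a b) c = join a (join b c)
  join_idem : ∀ a, join a a = a
  join_top : ∀ a, join a top = top
  seq_assoc : ∀ a b c, seq (seq a b) c = seq a (seq b c)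
  unit_seq : ∀ a, seq unit a = a
  seq_unit : ∀ a, seq a unit = a
  seq_join : ∀ a b c, seq a (join b c) = join (seq a b) (seq a c)
  join_seq : ∀ a b c, seq (join a b) c = join (seq a c) (seq b c)
  top_seq : ∀ a, seq top a = top
  seq_top : ∀ a, seq a top = top

/-- The induced partial order: `x ⊑ y` iff `x ⊔ y = y`. -/
def EffectQuantale.le {E : Type*} (Q : EffectQuantale E) (x y : E) : Prop :=
  Q.join x y = y

/-- Flanagan–Qadeer atomicities: both-mover, left-mover, right-mover, atomic,
their top, and an added error element. -/
inductive Atom : Type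
  | B | L | R | A | T | Err
deriving DecidableEq

/-- The lattice order on atomicities: B ⊑ L,R ⊑ A ⊑ ⊤_FQ ⊑ Err. -/
def Atom.ale : Atom → Atom → Bool
  | .B, _ => true
  | _, .Err => true
  | .L, .L => true | .L, .A => true | .L, .T => true
  | .R, .R => true | .R, .A => true | .R, .T => true
  | .A, .A => true | .A, .T => true
  | .T, .T => true
  | _, _ => false

/-- Join in the atomicity lattice (the only incomparable pair is L, R with join A). -/
def Atom.join (a b : Atom) : Atom :=
  if Atom.ale a b then b else if Atom.ale b a then a else .A

/-- Flanagan–Qadeer sequential composition of atomicities, with Err absorbing. -/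
def Atom.seq : Atom → Atom → Atom
  | .Err, _ => .Err
  | _, .Err => .Err
  | .B, x => x
  | x, .B => x
  | .R, .L => .A | .R, .R => .R | .R, .A => .A | .R, .T => .T
  | .L, .L => .L | .L, .R => .T | .L, .A => .T | .L, .T => .T
  | .A, .L => .A | .A, .R => .T | .A, .A => .T | .A, .T => .T
  | .T, _ => .T

instance : Fintype Atom :=
  ⟨⟨{.B, .L, .R, .A, .T, .Err}, by decide⟩, by intro x; cases x <;> decide⟩

/-- The atomicity structure is an effect quantale with unit B and top Err;
in particular its composition is associative and distributes over binary joins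
on both sides (these are among the effect quantale laws). -/
theorem atomicity_effect_quantale :
    ∃ Q : EffectQuantale Atom,
      Q.join = Atom.join ∧ Q.seq = Atom.seq ∧ Q.top = Atom.Err ∧ Q.unit = Atom.B := by
  refine ⟨⟨Atom.join, Atom.seq, .Err, .B, ?_, ?_, ?_, ?_, ?_, ?_, ?_, ?_, ?_, ?_, ?_⟩, rfl, rfl, rfl, rfl⟩ <;> decide
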